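/- arXiv:2406.14997 — 3 statements merged into one kernel-verified Lean document; each statement's English description precedes it below -/
import Mathlib

section
/- Suppose p,q ≥ 1, pq > 1, α,β > 0, α+β ≤ n-2, and assume the Joseph-Lundgren condition F(λ*) ≥ 0, where F(λ) = Q(α-λ)Q(β-λ) - pq·Q(α)Q(β), Q(λ) = λ(n-2-λ), λ* = (α+β)/2 - (n-2)/2. Then F has a real root in each of the intervals (-∞, 2λ*), (2λ*, λ*], [λ*, 0), and (0, ∞). Moreover, F(λ*) = 0 if and only if λ* is a double root of F. -/
/-!
Since `Q` is symmetric about `(n - 2) / 2`, the quartic `F` is symmetric about `λ*`, and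
`F 0 = (1 - p q) Q(α) Q(β) < 0 ≤ F λ*` while `F → +∞`. The intermediate value theorem gives roots
in `[λ*, 0)` and `(0, ∞)`, and reflecting them in `λ*` gives the other two. Symmetry also forces
`F' λ* = 0`, so `λ*` is a root exactly when it is a double root.
-/

open Filter

section SymmetricFunction

variable {F : ℝ → ℝ} {c : ℝ}

theorem deriv_eq_zero_of_symmetric (hsym : ∀ x, F (2 * c - x) = F x) : deriv F c = 0 := by
  have hrefl : deriv (fun x ↦ F (2 * c - x)) c = -deriv F c := by
    rw [deriv_comp_const_sub, two_mul, add_sub_cancel_right]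
  simp only [hsym] at hrefl
  linarith

theorem exists_root_Ico_of_nonneg_of_neg (hF : Continuous F) (hc : c ≤ 0) (hFc : 0 ≤ F c)
    (hF0 : F 0 < 0) : ∃ x, c ≤ x ∧ x < 0 ∧ F x = 0 := by
  obtain ⟨x, ⟨hcx, hx0⟩, hx⟩ := intermediate_value_Ico' hc hF.continuousOn ⟨hF0, hFc⟩
  exact ⟨x, hcx, hx0, hx⟩

theorem exists_pos_root_of_neg_of_tendsto (hF : Continuous F) (hF0 : F 0 < 0)
    (htop : Tendsto F atTop atTop) : ∃ x, 0 < x ∧ F x = 0 := by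
  obtain ⟨y, hFy, hy⟩ := ((htop.eventually_ge_atTop 0).and (eventually_gt_atTop 0)).exists
  obtain ⟨x, ⟨hx0, -⟩, hx⟩ := intermediate_value_Ioc hy.le hF.continuousOn ⟨hF0, hFy⟩
  exact ⟨x, hx0, hx⟩

theorem exists_roots_of_symmetric (hF : Continuous F) (hsym : ∀ x, F (2 * c - x) = F x)
    (hc : c ≤ 0) (hFc : 0 ≤ F c) (hF0 : F 0 < 0) (htop : Tendsto F atTop atTop) :
    (∃ x, x < 2 * c ∧ F x = 0) ∧ (∃ x, 2 * c < x ∧ x ≤ c ∧ F x = 0) ∧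
      (∃ x, c ≤ x ∧ x < 0 ∧ F x = 0) ∧ (∃ x, 0 < x ∧ F x = 0) := by
  obtain ⟨x₁, hcx₁, hx₁0, hx₁⟩ := exists_root_Ico_of_nonneg_of_neg hF hc hFc hF0
  obtain ⟨x₂, hx₂0, hx₂⟩ := exists_pos_root_of_neg_of_tendsto hF hF0 htop
  exact ⟨⟨2 * c - x₂, by linarith, by rw [hsym, hx₂]⟩,
    ⟨2 * c - x₁, by linarith, by linarith, by rw [hsym, hx₁]⟩,
    ⟨x₁, hcx₁, hx₁0, hx₁⟩, ⟨x₂, hx₂0, hx₂⟩⟩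

end SymmetricFunction

theorem tendsto_sub_mul_add_atBot (a b : ℝ) :
    Tendsto (fun x : ℝ ↦ (a - x) * (b + x)) atTop atBot := by
  refine Tendsto.atBot_mul_atTop₀ ?_ (tendsto_atTop_add_const_left _ b tendsto_id)
  exact (tendsto_atBot_add_const_left _ a tendsto_neg_atTop_atBot).congr fun x ↦ by ring

theorem roots_lemma_general (n p q α β : ℝ)
    (hpq : 1 < p * q)
    (hα : 0 < α) (hβ : 0 < β) (hab : α + β ≤ n - 2)
    (Q F : ℝ → ℝ) (lamS : ℝ)
    (hQ : ∀ lam, Q lam = lam * (n - 2 - lam))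
    (hF : ∀ lam, F lam = Q (α - lam) * Q (β - lam) - p * q * Q α * Q β)
    (hlamS : lamS = (α + β) / 2 - (n - 2) / 2)
    (hJL : 0 ≤ F lamS) :
    (∃ x, x < 2 * lamS ∧ F x = 0) ∧
    (∃ x, 2 * lamS < x ∧ x ≤ lamS ∧ F x = 0) ∧
    (∃ x, lamS ≤ x ∧ x < 0 ∧ F x = 0) ∧
    (∃ x, 0 < x ∧ F x = 0) ∧
    (F lamS = 0 ↔ F lamS = 0 ∧ deriv F lamS = 0) := by
  have hF_eq : F = fun x ↦
      (α - x) * (n - 2 - α + x) * ((β - x) * (n - 2 - β + x)) - p * q * Q α * Q β := by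
    funext x; simp only [hF, hQ]; ring
  have hsym : ∀ x, F (2 * lamS - x) = F x := fun x ↦ by simp only [hF_eq, hlamS]; ring
  have hF0 : F 0 < 0 := by
    have hQαβ : 0 < Q α * Q β := by
      rw [hQ, hQ]; exact mul_pos (mul_pos hα (by linarith)) (mul_pos hβ (by linarith))
    have : F 0 = (1 - p * q) * (Q α * Q β) := by rw [hF, sub_zero, sub_zero]; ring
    rw [this]; exact mul_neg_of_neg_of_pos (by linarith) hQαβ
  have hcont : Continuous F := by rw [hF_eq]; fun_prop
  have htop : Tendsto F atTop atTop := by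
    rw [hF_eq]
    exact tendsto_atTop_add_const_right _ _
      ((tendsto_sub_mul_add_atBot α _).atBot_mul_atBot₀ (tendsto_sub_mul_add_atBot β _))
  obtain ⟨r₁, r₂, r₃, r₄⟩ :=
    exists_roots_of_symmetric hcont hsym (by rw [hlamS]; linarith) hJL hF0 htop
  exact ⟨r₁, r₂, r₃, r₄, ⟨fun h ↦ ⟨h, deriv_eq_zero_of_symmetric hsym⟩, And.left⟩⟩

theorem roots_lemma (n p q α β : ℝ) (hn : 3 ≤ n)
    (hp : 1 ≤ p) (hq : 1 ≤ q) (hpq : 1 < p * q)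
    (hα : 0 < α) (hβ : 0 < β) (hab : α + β ≤ n - 2)
    (Q F : ℝ → ℝ) (lamS : ℝ)
    (hQ : ∀ lam, Q lam = lam * (n - 2 - lam))
    (hF : ∀ lam, F lam = Q (α - lam) * Q (β - lam) - p * q * Q α * Q β)
    (hlamS : lamS = (α + β) / 2 - (n - 2) / 2)
    (hJL : 0 ≤ F lamS) :
    (∃ x, x < 2 * lamS ∧ F x = 0) ∧
    (∃ x, 2 * lamS < x ∧ x ≤ lamS ∧ F x = 0) ∧
    (∃ x, lamS ≤ x ∧ x < 0 ∧ F x = 0) ∧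
    (∃ x, 0 < x ∧ F x = 0) ∧
    (F lamS = 0 ↔ F lamS = 0 ∧ deriv F lamS = 0) :=
  roots_lemma_general n p q α β hpq hα hβ hab Q F lamS hQ hF hlamS hJL
end

section
/- Let n ≥ 3, k,l ≥ 0, p,q ≥ 1, pq > 1, α = (k+2+(l+2)p)/(pq-1), β = (l+2+(k+2)q)/(pq-1), α+β ≤ n-2, and suppose -γ is a root of F(λ) = Q(α-λ)Q(β-λ) - pq·Q(α)Q(β) with 0 < γ and 0 < α+γ < n-2, 0 < β+γ < n-2. Let C_β = (Q(β)Q(α)^q)^{1/(pq-1)} and v*(x) = C_β|x|^{-β}, u*(x) = C_α|x|^{-α} with C_α = (Q(α)Q(β)^p)^{1/(pq-1)}. Then φ(x) = (pC_β^{p-1}/Q(α+γ))|x|^{-α-γ} and ψ(x) = |x|^{-β-γ} satisfy -Δφ = p|x|^k v*^{p-1} ψ and -Δψ = q|x|^l u*^{q-1} φ on ℝ^n \ {0}. -/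
/-!
Radial powers satisfy `-Δ ‖x‖ ^ (-λ) = Q λ * ‖x‖ ^ (-λ - 2)`, so both equations reduce to
identities between exponents and between coefficients. The exponents match because
`β p = α + k + 2` and `α q = β + l + 2`. For the coefficients,
`Cα ^ (q - 1) * Cβ ^ (p - 1) = Q α * Q β`, which turns the root condition `F(-γ) = 0` into
`p q Cα ^ (q - 1) Cβ ^ (p - 1) = Q (α + γ) Q (β + γ)`.
-/

noncomputable def laplacian {n : ℕ} (f : EuclideanSpace ℝ (Fin n) → ℝ)
    (x : EuclideanSpace ℝ (Fin n)) : ℝ :=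
  ∑ i : Fin n, iteratedDeriv 2 (fun t : ℝ => f (x + t • EuclideanSpace.single i (1 : ℝ))) 0

open Filter Topology

theorem hasDerivAt_quadratic_rpow (s a c : ℝ) {t : ℝ} (ht : c + 2 * a * t + t ^ 2 ≠ 0) :
    HasDerivAt (fun t : ℝ => (c + 2 * a * t + t ^ 2) ^ (s / 2))
      (s * (a + t) * (c + 2 * a * t + t ^ 2) ^ ((s - 2) / 2)) t := by
  have hg : HasDerivAt (fun t : ℝ => c + 2 * a * t + t ^ 2) (2 * a + 2 * t) t := by
    refine ((((hasDerivAt_id t).const_mul (2 * a)).const_add c).add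
      ((hasDerivAt_id t).pow 2)).congr_deriv ?_
    simp
  convert hg.rpow_const (p := s / 2) (Or.inl ht) using 1
  rw [show (s - 2) / 2 = s / 2 - 1 by ring]
  ring

theorem iteratedDeriv_two_quadratic_rpow (s a : ℝ) {c : ℝ} (hc : 0 < c) :
    iteratedDeriv 2 (fun t : ℝ => (c + 2 * a * t + t ^ 2) ^ (s / 2)) 0
      = s * (s - 2) * a ^ 2 * c ^ ((s - 4) / 2) + s * c ^ ((s - 2) / 2) := by
  have hc0 : c + 2 * a * 0 + 0 ^ 2 ≠ 0 := by simpa using hc.ne'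
  have hne : ∀ᶠ t in 𝓝 (0 : ℝ), c + 2 * a * t + t ^ 2 ≠ 0 :=
    (by fun_prop : Continuous fun t : ℝ => c + 2 * a * t + t ^ 2).continuousAt.eventually_ne hc0
  have hderiv : deriv (fun t : ℝ => (c + 2 * a * t + t ^ 2) ^ (s / 2))
      =ᶠ[𝓝 0] fun t => s * (a + t) * (c + 2 * a * t + t ^ 2) ^ ((s - 2) / 2) :=
    hne.mono fun t ht => (hasDerivAt_quadratic_rpow s a c ht).deriv
  have hsecond := (((hasDerivAt_id (0 : ℝ)).const_add a).const_mul s).mul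
    (hasDerivAt_quadratic_rpow (s - 2) a c hc0)
  rw [iteratedDeriv_succ, iteratedDeriv_one, hderiv.deriv_eq]
  convert hsecond.deriv using 1
  · rfl
  · simp only [id]; ring_nf

theorem norm_add_smul_single_sq {n : ℕ} (x : EuclideanSpace ℝ (Fin n)) (i : Fin n) (t : ℝ) :
    ‖x + t • EuclideanSpace.single i (1 : ℝ)‖ ^ 2 = ‖x‖ ^ 2 + 2 * x i * t + t ^ 2 := by
  rw [norm_add_sq_real, real_inner_smul_right, EuclideanSpace.inner_single_right, norm_smul,
    PiLp.norm_single]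
  simp only [conj_trivial, mul_one, norm_one, Real.norm_eq_abs, sq_abs]
  ring

theorem laplacian_const_mul {n : ℕ} (c : ℝ) (f : EuclideanSpace ℝ (Fin n) → ℝ)
    (x : EuclideanSpace ℝ (Fin n)) :
    laplacian (fun y => c * f y) x = c * laplacian f x := by
  simp only [laplacian, iteratedDeriv_const_mul_field, Finset.mul_sum]

theorem laplacian_norm_rpow {n : ℕ} (s : ℝ) {x : EuclideanSpace ℝ (Fin n)} (hx : x ≠ 0) :
    laplacian (fun y => ‖y‖ ^ s) x = s * (s + n - 2) * ‖x‖ ^ (s - 2) := by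
  have hr : 0 < ‖x‖ := norm_pos_iff.mpr hx
  have hsq (y : EuclideanSpace ℝ (Fin n)) (u : ℝ) : (‖y‖ ^ 2) ^ (u / 2) = ‖y‖ ^ u := by
    rw [Real.rpow_div_two_eq_sqrt _ (sq_nonneg _), Real.sqrt_sq (norm_nonneg y)]
  have hcoord : ∀ i : Fin n,
      iteratedDeriv 2 (fun t : ℝ => ‖x + t • EuclideanSpace.single i (1 : ℝ)‖ ^ s) 0
        = s * (s - 2) * x i ^ 2 * ‖x‖ ^ (s - 4) + s * ‖x‖ ^ (s - 2) := fun i => by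
    simp only [← hsq _ s, norm_add_smul_single_sq]
    rw [iteratedDeriv_two_quadratic_rpow s (x i) (by positivity), hsq, hsq]
  have hsum : ∑ i : Fin n, x i ^ 2 = ‖x‖ ^ 2 := by
    simp [EuclideanSpace.norm_sq_eq]
  have hpow : ‖x‖ ^ (s - 4) * ‖x‖ ^ 2 = ‖x‖ ^ (s - 2) := by
    rw [← Real.rpow_natCast, ← Real.rpow_add hr]; ring_nf
  simp only [laplacian, hcoord, Finset.sum_add_distrib, ← Finset.sum_mul, ← Finset.mul_sum,
    hsum, Finset.sum_const, Finset.card_univ, Fintype.card_fin, nsmul_eq_mul]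
  linear_combination s * (s - 2) * hpow

theorem rpow_pow_mul_rpow_pow_eq_mul {A B p q : ℝ} (hA : 0 < A) (hB : 0 < B) (hpq : p * q ≠ 1) :
    ((A * B ^ p) ^ (1 / (p * q - 1))) ^ (q - 1) * ((B * A ^ q) ^ (1 / (p * q - 1))) ^ (p - 1)
      = A * B := by
  have he : 1 / (p * q - 1) * (p * q - 1) = 1 := one_div_mul_cancel (sub_ne_zero.mpr hpq)
  set e := 1 / (p * q - 1)
  rw [← Real.rpow_mul (by positivity), ← Real.rpow_mul (by positivity),
    Real.mul_rpow hA.le (by positivity), Real.mul_rpow hB.le (by positivity),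
    ← Real.rpow_mul hB.le, ← Real.rpow_mul hA.le]
  calc A ^ (e * (q - 1)) * B ^ (p * (e * (q - 1))) * (B ^ (e * (p - 1)) * A ^ (q * (e * (p - 1))))
      = A ^ (e * (q - 1) + q * (e * (p - 1))) * B ^ (p * (e * (q - 1)) + e * (p - 1)) := by
        rw [Real.rpow_add hA, Real.rpow_add hB]; ring
    _ = A * B := by
        rw [show e * (q - 1) + q * (e * (p - 1)) = 1 by linear_combination he,
          show p * (e * (q - 1)) + e * (p - 1) = 1 by linear_combination he, Real.rpow_one,
          Real.rpow_one]

theorem rpow_mul_mul_rpow_rpow_mul_rpow {r C : ℝ} (hr : 0 < r) (hC : 0 ≤ C) (k a m b : ℝ) :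
    r ^ k * (C * r ^ a) ^ m * r ^ b = C ^ m * r ^ (k + a * m + b) := by
  rw [Real.mul_rpow hC (Real.rpow_nonneg hr.le _), ← Real.rpow_mul hr.le, Real.rpow_add hr,
    Real.rpow_add hr]
  ring

theorem scaling_exponents_mul_eq {k l p q α β : ℝ} (hpq : p * q ≠ 1)
    (hα : α = (k + 2 + (l + 2) * p) / (p * q - 1))
    (hβ : β = (l + 2 + (k + 2) * q) / (p * q - 1)) :
    β * p = α + k + 2 ∧ α * q = β + l + 2 := by
  have hD : p * q - 1 ≠ 0 := sub_ne_zero.mpr hpq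
  have hα' : α * (p * q - 1) = k + 2 + (l + 2) * p := by rw [hα, div_mul_cancel₀ _ hD]
  have hβ' : β * (p * q - 1) = l + 2 + (k + 2) * q := by rw [hβ, div_mul_cancel₀ _ hD]
  exact ⟨mul_right_cancel₀ hD (by linear_combination p * hβ' - hα'),
    mul_right_cancel₀ hD (by linear_combination q * hα' - hβ')⟩

theorem scaling_exponents_pos {k l p q α β : ℝ} (hk : 0 ≤ k) (hl : 0 ≤ l) (hp : 0 ≤ p)
    (hq : 0 ≤ q) (hpq : 1 < p * q)
    (hα : α = (k + 2 + (l + 2) * p) / (p * q - 1))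
    (hβ : β = (l + 2 + (k + 2) * q) / (p * q - 1)) :
    0 < α ∧ 0 < β := by
  have hD : 0 < p * q - 1 := by linarith
  exact ⟨hα ▸ div_pos (by positivity) hD, hβ ▸ div_pos (by positivity) hD⟩

theorem linearized_solution_general (n : ℕ) (k l p q α β γ Cα Cβ : ℝ)
    (hk : 0 ≤ k) (hl : 0 ≤ l) (hp : 1 ≤ p) (hq : 1 ≤ q) (hpq : 1 < p * q)
    (hα : α = (k + 2 + (l + 2) * p) / (p * q - 1))
    (hβ : β = (l + 2 + (k + 2) * q) / (p * q - 1))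
    (hsob : α + β ≤ (n : ℝ) - 2)
    (Q : ℝ → ℝ) (hQ : ∀ lam, Q lam = lam * ((n : ℝ) - 2 - lam))
    (hroot : Q (α + γ) * Q (β + γ) - p * q * Q α * Q β = 0)
    (hag : 0 < α + γ) (hag' : α + γ < (n : ℝ) - 2)
    (hCα : Cα = (Q α * Q β ^ p) ^ (1 / (p * q - 1)))
    (hCβ : Cβ = (Q β * Q α ^ q) ^ (1 / (p * q - 1))) :
    ∀ x : EuclideanSpace ℝ (Fin n), x ≠ 0 →
      -laplacian
          (fun y : EuclideanSpace ℝ (Fin n) =>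
            p * Cβ ^ (p - 1) / Q (α + γ) * ‖y‖ ^ (-α - γ)) x
        = p * ‖x‖ ^ k * (Cβ * ‖x‖ ^ (-β)) ^ (p - 1) * ‖x‖ ^ (-β - γ) ∧
      -laplacian (fun y : EuclideanSpace ℝ (Fin n) => ‖y‖ ^ (-β - γ)) x
        = q * ‖x‖ ^ l * (Cα * ‖x‖ ^ (-α)) ^ (q - 1) *
            (p * Cβ ^ (p - 1) / Q (α + γ) * ‖x‖ ^ (-α - γ)) := by
  have hQpos : ∀ lam, 0 < lam → lam < (n : ℝ) - 2 → 0 < Q lam := fun lam h0 h1 => by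
    rw [hQ]; exact mul_pos h0 (by linarith)
  have hQneg : ∀ a b, (-a - b) * (-a - b + n - 2) = -Q (a + b) := fun a b => by rw [hQ]; ring
  obtain ⟨hα0, hβ0⟩ := scaling_exponents_pos hk hl (by linarith) (by linarith) hpq hα hβ
  have hQα := hQpos α hα0 (by linarith)
  have hQβ := hQpos β hβ0 (by linarith)
  have hQαγ := (hQpos (α + γ) hag hag').ne'
  obtain ⟨hβp, hαq⟩ := scaling_exponents_mul_eq hpq.ne' hα hβ
  have hφcoef : p * Cβ ^ (p - 1) / Q (α + γ) * Q (α + γ) = p * Cβ ^ (p - 1) :=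
    div_mul_cancel₀ _ hQαγ
  have hCαβ : Cα ^ (q - 1) * Cβ ^ (p - 1) = Q α * Q β := by
    rw [hCα, hCβ]; exact rpow_pow_mul_rpow_pow_eq_mul hQα hQβ hpq.ne'
  have hψcoef : q * Cα ^ (q - 1) * (p * Cβ ^ (p - 1) / Q (α + γ)) = Q (β + γ) := by
    field_simp
    linear_combination p * q * hCαβ - hroot
  intro x hx
  have hr : 0 < ‖x‖ := norm_pos_iff.mpr hx
  have hψrhs : ‖x‖ ^ l * (Cα * ‖x‖ ^ (-α)) ^ (q - 1) * ‖x‖ ^ (-α - γ)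
      = Cα ^ (q - 1) * ‖x‖ ^ (-β - γ - 2) := by
    rw [rpow_mul_mul_rpow_rpow_mul_rpow hr (hCα ▸ by positivity)]
    congr 2; linear_combination -hαq
  have hφrhs : ‖x‖ ^ k * (Cβ * ‖x‖ ^ (-β)) ^ (p - 1) * ‖x‖ ^ (-β - γ)
      = Cβ ^ (p - 1) * ‖x‖ ^ (-α - γ - 2) := by
    rw [rpow_mul_mul_rpow_rpow_mul_rpow hr (hCβ ▸ by positivity)]
    congr 2; linear_combination -hβp
  rw [laplacian_const_mul, laplacian_norm_rpow _ hx, laplacian_norm_rpow _ hx, hQneg, hQneg]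
  constructor
  · linear_combination ‖x‖ ^ (-α - γ - 2) * hφcoef - p * hφrhs
  · linear_combination
      -(q * (p * Cβ ^ (p - 1) / Q (α + γ))) * hψrhs - ‖x‖ ^ (-β - γ - 2) * hψcoef

theorem linearized_solution (n : ℕ) (hn : 3 ≤ n) (k l p q α β γ Cα Cβ : ℝ)
    (hk : 0 ≤ k) (hl : 0 ≤ l) (hp : 1 ≤ p) (hq : 1 ≤ q) (hpq : 1 < p * q)
    (hα : α = (k + 2 + (l + 2) * p) / (p * q - 1))
    (hβ : β = (l + 2 + (k + 2) * q) / (p * q - 1))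
    (hsob : α + β ≤ (n : ℝ) - 2)
    (Q : ℝ → ℝ) (hQ : ∀ lam, Q lam = lam * ((n : ℝ) - 2 - lam))
    (hγ : 0 < γ)
    (hroot : Q (α + γ) * Q (β + γ) - p * q * Q α * Q β = 0)
    (hag : 0 < α + γ) (hag' : α + γ < (n : ℝ) - 2)
    (hbg : 0 < β + γ) (hbg' : β + γ < (n : ℝ) - 2)
    (hCα : Cα = (Q α * Q β ^ p) ^ (1 / (p * q - 1)))
    (hCβ : Cβ = (Q β * Q α ^ q) ^ (1 / (p * q - 1))) :
    ∀ x : EuclideanSpace ℝ (Fin n), x ≠ 0 →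
      -laplacian
          (fun y : EuclideanSpace ℝ (Fin n) =>
            p * Cβ ^ (p - 1) / Q (α + γ) * ‖y‖ ^ (-α - γ)) x
        = p * ‖x‖ ^ k * (Cβ * ‖x‖ ^ (-β)) ^ (p - 1) * ‖x‖ ^ (-β - γ) ∧
      -laplacian (fun y : EuclideanSpace ℝ (Fin n) => ‖y‖ ^ (-β - γ)) x
        = q * ‖x‖ ^ l * (Cα * ‖x‖ ^ (-α)) ^ (q - 1) *
            (p * Cβ ^ (p - 1) / Q (α + γ) * ‖x‖ ^ (-α - γ)) :=
  linearized_solution_general n k l p q α β γ Cα Cβ hk hl hp hq hpq hα hβ hsob Q hQ hroot hag hag'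
    hCα hCβ
end

section
/- Let n ≥ 11 and let α, β, p, q satisfy p,q ≥ 1, pq > 1, α,β > 0, α+β ≤ n-2, and the strict Joseph-Lundgren condition [((n-2)² - (α-β)²)/4]² > pq·Q(α)Q(β) where Q(λ)=λ(n-2-λ). Then the quartic F(λ) = Q(α-λ)Q(β-λ) - pq·Q(α)Q(β) has four distinct real roots -λ₁ < -λ₂ < -λ₃ < 0 < λ₄ with λᵢ > 0 for i = 1,2,3,4. -/
theorem four_distinct_roots (n p q α β : ℝ) (hn : 11 ≤ n)
    (hp : 1 ≤ p) (hq : 1 ≤ q) (hpq : 1 < p * q)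
    (hα : 0 < α) (hβ : 0 < β) (hab : α + β ≤ n - 2)
    (Q F : ℝ → ℝ)
    (hQ : ∀ lam, Q lam = lam * (n - 2 - lam))
    (hF : ∀ lam, F lam = Q (α - lam) * Q (β - lam) - p * q * Q α * Q β)
    (hJL : (((n - 2) ^ 2 - (α - β) ^ 2) / 4) ^ 2 > p * q * Q α * Q β) :
    ∃ lam1 lam2 lam3 lam4 : ℝ, 0 < lam1 ∧ 0 < lam2 ∧ 0 < lam3 ∧ 0 < lam4 ∧
      -lam1 < -lam2 ∧ -lam2 < -lam3 ∧
      (∀ x : ℝ, F x = 0 ↔ x = -lam1 ∨ x = -lam2 ∨ x = -lam3 ∨ x = lam4) := by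
  have hn2 : (9:ℝ) ≤ n - 2 := by linarith
  have hα2 : α < n - 2 := by linarith
  have hβ2 : β < n - 2 := by linarith
  have hQα : 0 < Q α := by rw [hQ]; exact mul_pos hα (by linarith)
  have hQβ : 0 < Q β := by rw [hQ]; exact mul_pos hβ (by linarith)
  set c := p * q * Q α * Q β with hc_def
  have hc : 0 < c := by
    rw [hc_def]
    have h1 : 0 < p * q := by linarith
    positivity
  clear_value c
  set sd := Real.sqrt ((n-2)^2*(α-β)^2 + 4*c) with hsd_def
  have hsd_nonneg : 0 ≤ sd := Real.sqrt_nonneg _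
  have hDnn : (0:ℝ) ≤ (n-2)^2*(α-β)^2 + 4*c := by
    have := mul_nonneg (sq_nonneg (n-2)) (sq_nonneg (α-β)); linarith
  have hsd2 : sd^2 = (n-2)^2*(α-β)^2 + 4*c := by
    rw [hsd_def]; exact Real.sq_sqrt hDnn
  have hsd_pos : 0 < sd := by
    rw [hsd_def]; apply Real.sqrt_pos.2
    have := mul_nonneg (sq_nonneg (n-2)) (sq_nonneg (α-β)); linarith
  set tp := (((n-2)^2+(α-β)^2)/2 + sd)/2 with htp_def
  set tm := (((n-2)^2+(α-β)^2)/2 - sd)/2 with htm_def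
  clear_value sd tp tm
  have htmtp : tm < tp := by rw [htp_def, htm_def]; linarith
  -- tm > 0 : since sd^2 < S^2 where S = ((n-2)^2+(α-β)^2)/2
  have hsdS : sd < ((n-2)^2+(α-β)^2)/2 := by
    clear * - hsd2 hJL hsd_nonneg hn2
    nlinarith [hsd2, hJL, hsd_nonneg, sq_nonneg (α-β), hn2, sq_nonneg ((n-2)^2 - (α-β)^2)]
  have htm_pos : 0 < tm := by rw [htm_def]; linarith
  have htp_pos : 0 < tp := lt_trans htm_pos htmtp
  -- factorization into the biquadratic
  have hfac : ∀ x : ℝ, F x =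
      ((x - (α+β-(n-2))/2)^2 - tp) * ((x - (α+β-(n-2))/2)^2 - tm) := by
    intro x
    rw [hF, hQ, hQ, htp_def, htm_def]
    linear_combination ((1:ℝ)/4) * hsd2
  -- F 0 < 0
  obtain ⟨s, hs_def⟩ : ∃ s : ℝ, s = ((α+β-(n-2))/2)^2 := ⟨_, rfl⟩
  have hF0 : (s - tp) * (s - tm) < 0 := by
    have hx : ((0 - (α+β-(n-2))/2)^2 - tp) * ((0 - (α+β-(n-2))/2)^2 - tm) < 0 := by
      rw [← hfac 0]
      have h0 := hF 0
      simp only [sub_zero] at h0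
      rw [h0, hc_def]
      clear * - hQα hQβ hpq
      nlinarith [mul_pos hQα hQβ, hpq]
    have he : (0 - (α+β-(n-2))/2)^2 = s := by rw [hs_def]; ring
    rwa [he] at hx
  have h1 : s < tp := by clear * - hF0 htmtp; nlinarith [hF0, htmtp]
  have h2 : tm < s := by clear * - hF0 htmtp; nlinarith [hF0, htmtp]
  have hσneg : (α+β-(n-2))/2 < 0 := by
    rcases lt_or_eq_of_le (show (α+β-(n-2))/2 ≤ 0 by linarith) with h | h
    · exact h
    · rw [h] at hs_def; norm_num at hs_def; linarith
  set stp := Real.sqrt tp with hstp_def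
  set stm := Real.sqrt tm with hstm_def
  clear_value stp stm
  have hstp2 : stp^2 = tp := by rw [hstp_def]; exact Real.sq_sqrt htp_pos.le
  have hstm2 : stm^2 = tm := by rw [hstm_def]; exact Real.sq_sqrt htm_pos.le
  have hstp_pos : 0 < stp := by rw [hstp_def]; exact Real.sqrt_pos.2 htp_pos
  have hstm_pos : 0 < stm := by rw [hstm_def]; exact Real.sqrt_pos.2 htm_pos
  have hstp_gt : -((α+β-(n-2))/2) < stp := by clear * - h1 hstp2 hstp_pos hσneg hs_def; nlinarith [h1, hstp2, hstp_pos, hσneg, hs_def]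
  have hstm_lt : stm < -((α+β-(n-2))/2) := by clear * - h2 hstm2 hstm_pos hσneg hs_def; nlinarith [h2, hstm2, hstm_pos, hσneg, hs_def]
  have hstmp : stm < stp := by clear * - hstp2 hstm2 htmtp hstp_pos hstm_pos; nlinarith [hstp2, hstm2, htmtp, hstp_pos, hstm_pos]
  refine ⟨stp - (α+β-(n-2))/2, stm - (α+β-(n-2))/2, -((α+β-(n-2))/2) - stm,
      (α+β-(n-2))/2 + stp, by linarith, by linarith, by linarith, by linarith,
      by linarith, by linarith, ?_⟩
  intro x
  have hfull : F x = (x - ((α+β-(n-2))/2 - stp)) * (x - ((α+β-(n-2))/2 + stp)) *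
      ((x - ((α+β-(n-2))/2 - stm)) * (x - ((α+β-(n-2))/2 + stm))) := by
    rw [hfac x, ← hstp2, ← hstm2]; ring
  rw [hfull]
  simp only [mul_eq_zero, sub_eq_zero]
  clear * - x
  constructor
  · rintro ((h | h) | (h | h))
    · exact Or.inl (by linarith)
    · exact Or.inr (Or.inr (Or.inr (by linarith)))
    · exact Or.inr (Or.inl (by linarith))
    · exact Or.inr (Or.inr (Or.inl (by linarith)))
  · rintro (h | h | h | h)
    · exact Or.inl (Or.inl (by linarith))
    · exact Or.inr (Or.inl (by linarith))
    · exact Or.inr (Or.inr (by linarith))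
    · exact Or.inl (Or.inr (by linarith))
end
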